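/- Suppose ω = (q_n)_{n≥1} ∈ (0,1)^ℕ is increasing, i.e., q_n ≤ q_{n+1} for all n. Order the components of E_k(ω) from left to right as I_k^1, …, I_k^{2^k} and let J_k^j be the open interval between I_k^j and I_k^{j+1}. Then for every k ≥ 1 and every j ∈ {1, …, 2^k − 1}: if j is odd then |J_k^j| ≤ (2/(1−q_k))·|I_k^j|, and if j is even then |J_k^j| ≤ 2·(2/(1−q_k))^k·|I_k^j|. -/

import Mathlib

/-- `L_n = 2^{-n} ∏_{i=1}^n (1 - q_i)`. -/
noncomputable def cantorL (q : ℕ → ℝ) (n : ℕ) : ℝ :=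
  (∏ i ∈ Finset.Icc 1 n, (1 - q i)) / 2 ^ n

/-- Left endpoint of the `j`-th level-`k` interval `I_k^j` (`1 ≤ j ≤ 2^k`), i.e. the
level-`k` interval whose label `ε = (ε_1,…,ε_k)` has binary value
`v(ε) = ∑ ε_i 2^{k-i} = j - 1`; so `I_k^j = [cantorAIdx q k j, cantorAIdx q k j + L_k]`
(an interval of length `L_k`) and, for `1 ≤ j ≤ 2^k - 1`, the gap `J_k^j` between `I_k^j`
and `I_k^{j+1}` has length `cantorAIdx q k (j+1) - (cantorAIdx q k j + L_k)`. -/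
noncomputable def cantorAIdx (q : ℕ → ℝ) (k j : ℕ) : ℝ :=
  ∑ i ∈ Finset.Icc 1 k, if Nat.testBit (j - 1) (k - i) then cantorL q (i - 1) - cantorL q i else 0

/-!
Appending a digit to the labels makes the construction self-similar: the gap after
`I_{k+1}^{2n}` is the gap after `I_k^n`, while the gap after `I_{k+1}^{2n+1}` is
`L_k - 2 L_{k+1} = q_{k+1} L_k`. Hence for `j = 2^t (2m+1)` the gap `J_k^j` is
`q_{k-t} L_{k-t-1}`. As `q` increases, `L_{i-1} = 2 L_i / (1 - q_i) ≤ 2 L_i / (1 - q_k)` for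
`i ≤ k`, so `|J_k^j| ≤ (2 / (1 - q_k))^{t+1} L_k`, and `t = 0` exactly when `j` is odd.
-/

open Finset

section

variable (q : ℕ → ℝ)

noncomputable def cantorGap (k j : ℕ) : ℝ :=
  cantorAIdx q k (j + 1) - (cantorAIdx q k j + cantorL q k)

lemma cantorL_succ (n : ℕ) : cantorL q (n + 1) = (1 - q (n + 1)) * cantorL q n / 2 := by
  rw [cantorL, cantorL, prod_Icc_succ_top (by omega), pow_succ]
  field_simp

lemma cantorAIdx_succ_add_one (k x : ℕ) :
    cantorAIdx q (k + 1) (x + 1) = cantorAIdx q k (x / 2 + 1) +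
      if x % 2 = 1 then cantorL q k - cantorL q (k + 1) else 0 := by
  rw [cantorAIdx, cantorAIdx, sum_Icc_succ_top (by omega)]
  congr 1
  · refine sum_congr rfl fun i hi => ?_
    rw [show k + 1 - i = k - i + 1 by grind, Nat.testBit_add_one]
    simp
  · simp [Nat.testBit_zero]

lemma cantorAIdx_succ_two_mul_add_one (k n : ℕ) :
    cantorAIdx q (k + 1) (2 * n + 1) = cantorAIdx q k (n + 1) := by
  simp [cantorAIdx_succ_add_one]

lemma cantorAIdx_succ_two_mul_add_two (k n : ℕ) :
    cantorAIdx q (k + 1) (2 * n + 2) =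
      cantorAIdx q k (n + 1) + (cantorL q k - cantorL q (k + 1)) := by
  simp [cantorAIdx_succ_add_one, Nat.add_mod, Nat.add_div]

lemma cantorGap_succ_two_mul_add_one (k n : ℕ) :
    cantorGap q (k + 1) (2 * n + 1) = q (k + 1) * cantorL q k := by
  rw [cantorGap, cantorAIdx_succ_two_mul_add_two, cantorAIdx_succ_two_mul_add_one, cantorL_succ]
  ring

lemma cantorGap_succ_two_mul (k : ℕ) {n : ℕ} (hn : n ≠ 0) :
    cantorGap q (k + 1) (2 * n) = cantorGap q k n := by
  obtain ⟨n, rfl⟩ := Nat.exists_eq_add_one_of_ne_zero hn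
  rw [cantorGap, cantorGap, cantorAIdx_succ_two_mul_add_one, mul_add_one,
    cantorAIdx_succ_two_mul_add_two]
  ring

lemma cantorGap_two_pow_mul_odd (k t m : ℕ) :
    cantorGap q (k + t + 1) (2 ^ t * (2 * m + 1)) = q (k + 1) * cantorL q k := by
  induction t with
  | zero => simpa using cantorGap_succ_two_mul_add_one q k m
  | succ t ih =>
    rw [← ih, show k + (t + 1) + 1 = k + t + 1 + 1 by ring, pow_succ, mul_comm _ 2, mul_assoc]
    exact cantorGap_succ_two_mul q _ (by positivity)

end

section

variable {q : ℕ → ℝ}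

lemma cantorL_pos {n : ℕ} (hq : ∀ i ∈ Icc 1 n, q i < 1) : 0 < cantorL q n :=
  div_pos (prod_pos fun i hi => sub_pos.2 (hq i hi)) (by positivity)

lemma cantorL_le_pow_mul {c : ℝ} {a n : ℕ} (hc : ∀ i ∈ Icc 1 n, q i ≤ c) (hc1 : c < 1)
    (han : a ≤ n) : cantorL q a ≤ (2 / (1 - c)) ^ (n - a) * cantorL q n := by
  induction n, han using Nat.le_induction with
  | base => simp
  | succ n han ih =>
    have hq : ∀ i ∈ Icc 1 (n + 1), q i < 1 := fun i hi => (hc i hi).trans_lt hc1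
    have hL : 0 < cantorL q (n + 1) := cantorL_pos hq
    have hstep : cantorL q n ≤ 2 / (1 - c) * cantorL q (n + 1) := by
      have hq1 : 0 < 1 - q (n + 1) := sub_pos.2 (hq _ (by simp))
      calc cantorL q n = 2 / (1 - q (n + 1)) * cantorL q (n + 1) := by
            rw [cantorL_succ]; field_simp
        _ ≤ 2 / (1 - c) * cantorL q (n + 1) := by gcongr; exact hc _ (by simp)
    calc cantorL q a ≤ (2 / (1 - c)) ^ (n - a) * cantorL q n :=
          ih fun i hi => hc i (Icc_subset_Icc_right n.le_succ hi)
      _ ≤ (2 / (1 - c)) ^ (n - a) * (2 / (1 - c) * cantorL q (n + 1)) := by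
          gcongr
      _ = (2 / (1 - c)) ^ (n + 1 - a) * cantorL q (n + 1) := by
          rw [Nat.sub_add_comm han, pow_succ]; ring

lemma cantorGap_two_pow_mul_odd_le {c : ℝ} {k t : ℕ} (m : ℕ) (htk : t < k)
    (hc : ∀ i ∈ Icc 1 k, q i ≤ c) (hc1 : c < 1) :
    cantorGap q k (2 ^ t * (2 * m + 1)) ≤ (2 / (1 - c)) ^ (t + 1) * cantorL q k := by
  obtain ⟨s, rfl⟩ : ∃ s, k = s + t + 1 := ⟨k - t - 1, by omega⟩
  have hL : 0 ≤ cantorL q s :=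
    (cantorL_pos fun i hi => (hc i (Icc_subset_Icc_right (by omega) hi)).trans_lt hc1).le
  calc cantorGap q (s + t + 1) (2 ^ t * (2 * m + 1)) = q (s + 1) * cantorL q s :=
        cantorGap_two_pow_mul_odd q s t m
    _ ≤ cantorL q s := mul_le_of_le_one_left hL ((hc _ (by simp)).trans hc1.le)
    _ ≤ (2 / (1 - c)) ^ (t + 1) * cantorL q (s + t + 1) := by
        simpa [add_assoc, Nat.add_sub_cancel_left] using cantorL_le_pow_mul (a := s) hc hc1 (by omega)

end

theorem cantor_gap_bounds_of_increasing_general (q : ℕ → ℝ)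
    (hq : ∀ i, 1 ≤ i → q i ∈ Set.Ioo (0 : ℝ) 1)
    (hmono : ∀ n, 1 ≤ n → q n ≤ q (n + 1))
    (k j : ℕ) (hj₁ : 1 ≤ j) (hj₂ : j ≤ 2 ^ k - 1) :
    (Odd j →
      cantorAIdx q k (j + 1) - (cantorAIdx q k j + cantorL q k)
        ≤ 2 / (1 - q k) * cantorL q k)
    ∧ (Even j →
      cantorAIdx q k (j + 1) - (cantorAIdx q k j + cantorL q k)
        ≤ 2 * (2 / (1 - q k)) ^ k * cantorL q k) := by
  show (_ → cantorGap q k j ≤ _) ∧ (_ → cantorGap q k j ≤ _)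
  obtain ⟨t, m, ⟨m, rfl⟩, rfl⟩ := Nat.exists_eq_two_pow_mul_odd (n := j) (by omega)
  have htk : t < k := by
    have : 2 ^ t ≤ 2 ^ t * (2 * m + 1) := Nat.le_mul_of_pos_right _ (by omega)
    exact (Nat.pow_lt_pow_iff_right (a := 2) (by norm_num)).1 (by omega)
  have hqk := hq k (by omega)
  have hle : ∀ i ∈ Icc 1 k, q i ≤ q k := fun i hi =>
    monotoneOn_nat_Ici_of_le_succ hmono (mem_Icc.1 hi).1 (show 1 ≤ k by omega) (mem_Icc.1 hi).2
  have hgap := cantorGap_two_pow_mul_odd_le m htk hle hqk.2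
  have hL : 0 ≤ cantorL q k := (cantorL_pos fun i hi => (hle i hi).trans_lt hqk.2).le
  have hB : 1 ≤ 2 / (1 - q k) := by rw [le_div_iff₀ (by linarith [hqk.2])]; linarith [hqk.1]
  refine ⟨fun hodd => ?_, fun _ => ?_⟩
  · obtain rfl : t = 0 := by
      by_contra ht
      exact Nat.not_even_iff_odd.2 hodd ((Nat.even_pow.2 ⟨even_two, ht⟩).mul_right _)
    simpa using hgap
  · calc _ ≤ (2 / (1 - q k)) ^ (t + 1) * cantorL q k := hgap
      _ ≤ (2 / (1 - q k)) ^ k * cantorL q k := by gcongr; exact htk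
      _ ≤ 2 * (2 / (1 - q k)) ^ k * cantorL q k := by
          rw [mul_assoc]; exact le_mul_of_one_le_left (by positivity) one_le_two

/-- if `ω = (q_n)` is increasing then for every `k ≥ 1` and
`1 ≤ j ≤ 2^k − 1`, the gap `J_k^j` satisfies `|J_k^j| ≤ (2/(1−q_k))·|I_k^j|` when `j` is odd
and `|J_k^j| ≤ 2·(2/(1−q_k))^k·|I_k^j|` when `j` is even, where `|I_k^j| = L_k`. -/
theorem cantor_gap_bounds_of_increasing (q : ℕ → ℝ)
    (hq : ∀ i, 1 ≤ i → q i ∈ Set.Ioo (0 : ℝ) 1)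
    (hmono : ∀ n, 1 ≤ n → q n ≤ q (n + 1))
    (k j : ℕ) (hk : 1 ≤ k) (hj₁ : 1 ≤ j) (hj₂ : j ≤ 2 ^ k - 1) :
    (Odd j →
      cantorAIdx q k (j + 1) - (cantorAIdx q k j + cantorL q k)
        ≤ 2 / (1 - q k) * cantorL q k)
    ∧ (Even j →
      cantorAIdx q k (j + 1) - (cantorAIdx q k j + cantorL q k)
        ≤ 2 * (2 / (1 - q k)) ^ k * cantorL q k) :=
  cantor_gap_bounds_of_increasing_general q hq hmono k j hj₁ hj₂
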